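/- Let k_j^B(p,q) = (1/(2π))[Q_{j-1/2}((p/q + q/p)/2) + Q_{j+1/2}((p/q + q/p)/2)] and k_l^C(p,q) = (1/π) Q_l((p/q + q/p)/2), where Q_l are Legendre functions of the second kind. Define critical constants by 1/κ_j^B = ∫_0^∞ k_j^B(t, 1) dt/t evaluated along (t + 1/t)/2, i.e. 1/κ_j^B = ∫_0^∞ k_j^B applied to ((1/t + t)/2) dt/t, and similarly 1/κ_l^C. Then κ_{1/2}^B = 2/(2/π + π/2) and κ_0^C = 2/π and κ_1^C = π/2. -/

import Mathlib

open MeasureTheory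

/-- The Legendre polynomials, via Bonnet's recursion. -/
noncomputable def legendreP : ℕ → ℝ → ℝ
  | 0, _ => 1
  | 1, t => t
  | (n + 2), t =>
      ((2 * (n : ℝ) + 3) * t * legendreP (n + 1) t - ((n : ℝ) + 1) * legendreP n t) /
        ((n : ℝ) + 2)

/-- The Legendre function of the second kind, via Neumann's integral. -/
noncomputable def legendreQ (l : ℕ) (z : ℝ) : ℝ :=
  (1 / 2) * ∫ t in (-1 : ℝ)..1, legendreP l t / (z - t)

/-!
Write `z = (t + 1/t)/2` (the Joukowsky map). Both `z` and the measure `dt/t` are invariant under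
`t ↦ 1/t`, which exchanges `(0, 1)` and `(1, ∞)`, so each integral over `(0, ∞)` is twice the
one over `(0, 1)`. Neumann's integral gives `Q₀(z) = ½ log((z+1)/(z-1))` and `Q₁ = z Q₀ - 1`;
for `0 < t < 1` the first becomes `Q₀(z) = log((1+t)/(1-t)) = 2 ∑ t^(2k+1)/(2k+1)`.
All terms being nonnegative, integration term by term gives `∫₀¹ Q₀(z) dt/t = 2 ∑ 1/(2k+1)² = π²/4`
and `∫₀¹ Q₁(z) dt/t = ∑ (1/(2k+1) + 1/(2k+3))/(2k+2) = 1`.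
-/
open Set Filter Real Topology

lemma intervalIntegrable_one_div_sub {z : ℝ} (hz : 1 < z) :
    IntervalIntegrable (fun t ↦ 1 / (z - t)) volume (-1) 1 := by
  refine ContinuousOn.intervalIntegrable fun t ht ↦ ?_
  rw [uIcc_of_le (by norm_num)] at ht
  have : z - t ≠ 0 := by linarith [ht.2]
  fun_prop (disch := assumption)

lemma integral_one_div_sub {z : ℝ} (hz : 1 < z) :
    ∫ t in (-1 : ℝ)..1, 1 / (z - t) = log ((z + 1) / (z - 1)) := by
  rw [intervalIntegral.integral_comp_sub_left (fun x ↦ 1 / x) z, sub_neg_eq_add,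
    integral_one_div_of_pos (by linarith) (by linarith)]

lemma legendreQ_zero_eq {z : ℝ} (hz : 1 < z) :
    legendreQ 0 z = log ((z + 1) / (z - 1)) / 2 := by
  simp only [legendreQ, legendreP, integral_one_div_sub hz]
  ring

/-- `t / (z - t) = z / (z - t) - 1` turns Neumann's integral for `Q₁` into that for `Q₀`. -/
lemma legendreQ_one_eq {z : ℝ} (hz : 1 < z) : legendreQ 1 z = z * legendreQ 0 z - 1 := by
  have hsplit : ∀ t ∈ uIcc (-1 : ℝ) 1, legendreP 1 t / (z - t) = z * (1 / (z - t)) - 1 := by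
    intro t ht
    rw [uIcc_of_le (by norm_num)] at ht
    have : z - t ≠ 0 := by linarith [ht.2]
    simp only [legendreP]
    field_simp
    ring
  simp only [legendreQ, intervalIntegral.integral_congr hsplit]
  rw [intervalIntegral.integral_sub ((intervalIntegrable_one_div_sub hz).const_mul z)
    intervalIntegrable_const, intervalIntegral.integral_const_mul]
  simp only [legendreP, intervalIntegral.integral_const]
  norm_num
  ring

lemma one_lt_joukowsky {t : ℝ} (h0 : 0 < t) (h1 : t ≠ 1) : 1 < (t + 1 / t) / 2 := by
  have : (t + 1 / t) / 2 - 1 = (1 - t) ^ 2 / (2 * t) := by field_simp; ring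
  rw [← sub_pos, this]
  exact div_pos (pow_two_pos_of_ne_zero (sub_ne_zero.2 h1.symm)) (by linarith)

lemma legendreQ_zero_joukowsky {t : ℝ} (ht : t ∈ Ioo (0 : ℝ) 1) :
    legendreQ 0 ((t + 1 / t) / 2) = log (1 + t) - log (1 - t) := by
  obtain ⟨h0, h1⟩ := ht
  have hsub : (t + 1 / t) / 2 - 1 = (1 - t) ^ 2 / (2 * t) := by field_simp; ring
  have hadd : (t + 1 / t) / 2 + 1 = (1 + t) ^ 2 / (2 * t) := by field_simp; ring
  rw [legendreQ_zero_eq (one_lt_joukowsky h0 h1.ne), hadd, hsub,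
    div_div_div_cancel_right₀ (by positivity), ← div_pow, log_pow,
    log_div (by linarith) (by linarith)]
  push_cast
  ring

lemma legendreQ_one_joukowsky {t : ℝ} (ht : t ∈ Ioo (0 : ℝ) 1) :
    legendreQ 1 ((t + 1 / t) / 2) = (t + 1 / t) / 2 * (log (1 + t) - log (1 - t)) - 1 := by
  rw [legendreQ_one_eq (one_lt_joukowsky ht.1 ht.2.ne), legendreQ_zero_joukowsky ht]

lemma hasSum_log_sub_log_of_mem_Ioo {t : ℝ} (ht : t ∈ Ioo (0 : ℝ) 1) :
    HasSum (fun k : ℕ ↦ 2 / (2 * k + 1) * t ^ (2 * k + 1)) (log (1 + t) - log (1 - t)) :=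
  (hasSum_log_sub_log_of_abs_lt_one (abs_lt.2 ⟨by linarith [ht.1], ht.2⟩)).congr_fun
    fun k ↦ by ring

lemma hasSum_legendreQ_zero_joukowsky_div {t : ℝ} (ht : t ∈ Ioo (0 : ℝ) 1) :
    HasSum (fun k : ℕ ↦ 2 / (2 * k + 1) * t ^ (2 * k)) (legendreQ 0 ((t + 1 / t) / 2) / t) := by
  rw [legendreQ_zero_joukowsky ht]
  refine ((hasSum_log_sub_log_of_mem_Ioo ht).div_const t).congr_fun fun k ↦ ?_
  rw [pow_succ]
  field_simp [ht.1.ne']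

lemma hasSum_legendreQ_one_joukowsky_div {t : ℝ} (ht : t ∈ Ioo (0 : ℝ) 1) :
    HasSum (fun k : ℕ ↦ (1 / (2 * k + 1) + 1 / (2 * k + 3)) * t ^ (2 * k + 1))
      (legendreQ 1 ((t + 1 / t) / 2) / t) := by
  have ht0 : t ≠ 0 := ht.1.ne'
  set L := log (1 + t) - log (1 - t)
  have hhalf : HasSum (fun k : ℕ ↦ 1 / (2 * k + 1) * t ^ (2 * k + 1)) (L / 2) :=
    ((hasSum_log_sub_log_of_mem_Ioo ht).div_const 2).congr_fun fun k ↦ by ring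
  have hshift : HasSum (fun k : ℕ ↦ 1 / (2 * k + 3) * t ^ (2 * k + 1)) ((L / 2 - t) / t ^ 2) := by
    have := ((hasSum_nat_add_iff' 1).2 hhalf).div_const (t ^ 2)
    rw [Finset.sum_range_one, Nat.cast_zero] at this
    norm_num at this
    refine this.congr_fun fun k ↦ ?_
    field_simp
    ring
  have hval : L / 2 + (L / 2 - t) / t ^ 2 = legendreQ 1 ((t + 1 / t) / 2) / t := by
    rw [legendreQ_one_joukowsky ht]
    field_simp
    ring
  exact hval ▸ (hhalf.add hshift).congr_fun fun k ↦ by ring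

lemma integrable_and_integral_eq_of_hasSum_of_nonneg {α : Type*} [MeasurableSpace α]
    {μ : Measure α} {f : ℕ → α → ℝ} {g : α → ℝ} {A : ℝ}
    (hf : ∀ k, Integrable (f k) μ) (hf₀ : ∀ k, 0 ≤ᵐ[μ] f k)
    (hfg : ∀ᵐ x ∂μ, HasSum (fun k ↦ f k x) (g x))
    (hA : HasSum (fun k ↦ ∫ x, f k x ∂μ) A) :
    Integrable g μ ∧ ∫ x, g x ∂μ = A := by
  have hf₀' : ∀ᵐ x ∂μ, ∀ k, 0 ≤ f k x := ae_all_iff.2 hf₀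
  have hg₀ : 0 ≤ᵐ[μ] g := by
    filter_upwards [hfg, hf₀'] with x hx h0 using hx.nonneg h0
  have hg : AEStronglyMeasurable g μ :=
    aestronglyMeasurable_of_tendsto_ae atTop
      (fun n ↦ Finset.aestronglyMeasurable_fun_sum _ fun k _ ↦ (hf k).1)
      (hfg.mono fun x hx ↦ hx.tendsto_sum_nat)
  have hlint : ∫⁻ x, ENNReal.ofReal (g x) ∂μ = ENNReal.ofReal A := calc
    _ = ∫⁻ x, ∑' k, ENNReal.ofReal (f k x) ∂μ := by
      refine lintegral_congr_ae ?_
      filter_upwards [hfg, hf₀'] with x hx h0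
      rw [← hx.tsum_eq, ENNReal.ofReal_tsum_of_nonneg h0 hx.summable]
    _ = ∑' k, ∫⁻ x, ENNReal.ofReal (f k x) ∂μ :=
      lintegral_tsum fun k ↦ (hf k).aemeasurable.ennreal_ofReal
    _ = ∑' k, ENNReal.ofReal (∫ x, f k x ∂μ) := by
      congr 1 with k
      rw [ofReal_integral_eq_lintegral_ofReal (hf k) (hf₀ k)]
    _ = ENNReal.ofReal A := by
      rw [← ENNReal.ofReal_tsum_of_nonneg (fun k ↦ integral_nonneg_of_ae (hf₀ k)) hA.summable,
        hA.tsum_eq]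
  refine ⟨⟨hg, ?_⟩, ?_⟩
  · rw [hasFiniteIntegral_iff_ofReal hg₀, hlint]
    exact ENNReal.ofReal_lt_top
  · rw [integral_eq_lintegral_of_nonneg_ae hg₀ hg, hlint, ENNReal.toReal_ofReal]
    exact hA.nonneg fun k ↦ integral_nonneg_of_ae (hf₀ k)

lemma integral_Ioo_zero_one_pow (n : ℕ) : ∫ t in Ioo (0 : ℝ) 1, t ^ n = 1 / (n + 1) := by
  rw [← integral_Ioc_eq_integral_Ioo, ← intervalIntegral.integral_of_le zero_le_one,
    integral_pow]
  simp

lemma integrableOn_and_integral_Ioo_eq_of_hasSum_pow {c : ℕ → ℝ} {n : ℕ → ℕ} {g : ℝ → ℝ}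
    {A : ℝ} (hc : ∀ k, 0 ≤ c k) (hg : ∀ t ∈ Ioo (0 : ℝ) 1, HasSum (fun k ↦ c k * t ^ n k) (g t))
    (hA : HasSum (fun k ↦ c k / (n k + 1)) A) :
    IntegrableOn g (Ioo 0 1) ∧ ∫ t in Ioo (0 : ℝ) 1, g t = A := by
  refine integrable_and_integral_eq_of_hasSum_of_nonneg (f := fun k t ↦ c k * t ^ n k)
    (fun k ↦ ((continuous_const.mul (continuous_pow (n k))).integrableOn_Icc.mono_set
      Ioo_subset_Icc_self))
    (fun k ↦ ?_) ((ae_restrict_iff' measurableSet_Ioo).2 (.of_forall hg)) ?_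
  · filter_upwards [ae_restrict_mem measurableSet_Ioo] with t ht
    exact mul_nonneg (hc k) (pow_nonneg ht.1.le _)
  · refine hA.congr_fun fun k ↦ ?_
    rw [integral_const_mul, integral_Ioo_zero_one_pow]
    ring

/-- The odd part of `ζ(2) = π²/6`: the even part is `ζ(2)/4`. -/
lemma hasSum_one_div_odd_sq :
    HasSum (fun k : ℕ ↦ 1 / (2 * (k : ℝ) + 1) ^ 2) (π ^ 2 / 8) := by
  have heven : HasSum (fun k : ℕ ↦ 1 / ((2 * k : ℕ) : ℝ) ^ 2) (π ^ 2 / 24) := by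
    rw [show π ^ 2 / 24 = 1 / 4 * (π ^ 2 / 6) by ring]
    exact (hasSum_zeta_two.mul_left (1 / 4)).congr_fun fun k ↦ by push_cast; ring
  obtain ⟨b, hodd⟩ : Summable fun k : ℕ ↦ 1 / ((2 * k + 1 : ℕ) : ℝ) ^ 2 :=
    hasSum_zeta_two.summable.comp_injective (i := fun k : ℕ ↦ 2 * k + 1) fun a b h ↦ by
      simp only at h; omega
  have hb : b = π ^ 2 / 8 := by
    have := (HasSum.even_add_odd (f := fun n : ℕ ↦ 1 / (n : ℝ) ^ 2) heven hodd).unique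
      hasSum_zeta_two
    linarith
  subst hb
  exact hodd.congr_fun fun k ↦ by push_cast; ring

lemma hasSum_sub_succ_of_antitone {b : ℕ → ℝ} (hb : Antitone b)
    (hlim : Tendsto b atTop (𝓝 0)) : HasSum (fun k ↦ b k - b (k + 1)) (b 0) := by
  rw [hasSum_iff_tendsto_nat_of_nonneg fun k ↦ sub_nonneg.2 (hb k.le_succ)]
  simp_rw [Finset.sum_range_sub']
  simpa using tendsto_const_nhds.sub hlim

/-- The summand is `1 / (2k + 1) - 1 / (2k + 3)`, so the series telescopes. -/
lemma hasSum_one_div_odd_add_one_div_odd_div_even :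
    HasSum (fun k : ℕ ↦ (1 / (2 * (k : ℝ) + 1) + 1 / (2 * k + 3)) / (2 * k + 2)) 1 := by
  have hanti : Antitone fun k : ℕ ↦ 1 / (2 * (k : ℝ) + 1) := fun m n hmn ↦
    one_div_le_one_div_of_le (by positivity) (by gcongr)
  have hlim : Tendsto (fun k : ℕ ↦ 1 / (2 * (k : ℝ) + 1)) atTop (𝓝 0) :=
    tendsto_const_nhds.div_atTop <| tendsto_atTop_add_const_right _ 1 <|
      tendsto_natCast_atTop_atTop.const_mul_atTop two_pos
  have := hasSum_sub_succ_of_antitone hanti hlim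
  rw [Nat.cast_zero, mul_zero, zero_add, div_one] at this
  refine this.congr_fun fun k ↦ ?_
  push_cast
  field_simp
  ring

lemma integrableOn_and_integral_legendreQ_zero_joukowsky_div_Ioo :
    IntegrableOn (fun t ↦ legendreQ 0 ((t + 1 / t) / 2) / t) (Ioo 0 1) ∧
      ∫ t in Ioo (0 : ℝ) 1, legendreQ 0 ((t + 1 / t) / 2) / t = π ^ 2 / 4 := by
  refine integrableOn_and_integral_Ioo_eq_of_hasSum_pow (fun k ↦ by positivity)
    (fun _ ↦ hasSum_legendreQ_zero_joukowsky_div) ?_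
  rw [show π ^ 2 / 4 = 2 * (π ^ 2 / 8) by ring]
  refine (hasSum_one_div_odd_sq.mul_left 2).congr_fun fun k ↦ ?_
  push_cast
  field_simp

lemma integrableOn_and_integral_legendreQ_one_joukowsky_div_Ioo :
    IntegrableOn (fun t ↦ legendreQ 1 ((t + 1 / t) / 2) / t) (Ioo 0 1) ∧
      ∫ t in Ioo (0 : ℝ) 1, legendreQ 1 ((t + 1 / t) / 2) / t = 1 := by
  refine integrableOn_and_integral_Ioo_eq_of_hasSum_pow (fun k ↦ by positivity)
    (fun _ ↦ hasSum_legendreQ_one_joukowsky_div) ?_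
  refine hasSum_one_div_odd_add_one_div_odd_div_even.congr_fun fun k ↦ ?_
  push_cast
  ring

lemma integrableOn_Ioi_one_iff_and_integral_eq_comp_inv (G : ℝ → ℝ) :
    (IntegrableOn (fun t ↦ G t / t) (Ioi 1) ↔ IntegrableOn (fun t ↦ G t⁻¹ / t) (Ioo 0 1)) ∧
      ∫ t in Ioi (1 : ℝ), G t / t = ∫ t in Ioo (0 : ℝ) 1, G t⁻¹ / t := by
  have himage : Inv.inv '' Ioo (0 : ℝ) 1 = Ioi 1 := by
    rw [image_inv_eq_inv, inv_Ioo_0_left one_pos, inv_one]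
  have hderiv : ∀ t ∈ Ioo (0 : ℝ) 1, HasDerivWithinAt Inv.inv (-(t ^ 2)⁻¹) (Ioo 0 1) t :=
    fun t ht ↦ (hasDerivAt_inv ht.1.ne').hasDerivWithinAt
  have hinj : InjOn Inv.inv (Ioo (0 : ℝ) 1) := inv_injective.injOn
  have hjac : EqOn (fun t ↦ |-(t ^ 2)⁻¹| • (G t⁻¹ / t⁻¹)) (fun t ↦ G t⁻¹ / t) (Ioo 0 1) := by
    intro t ht
    have : t ≠ 0 := ht.1.ne'
    simp only [abs_neg, abs_inv, abs_pow, abs_of_pos ht.1, smul_eq_mul]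
    field_simp
  rw [← himage, integrableOn_image_iff_integrableOn_abs_deriv_smul measurableSet_Ioo hderiv hinj,
    integral_image_eq_integral_abs_deriv_smul measurableSet_Ioo hderiv hinj,
    integrableOn_congr_fun hjac measurableSet_Ioo, setIntegral_congr_fun measurableSet_Ioo hjac]
  exact ⟨Iff.rfl, rfl⟩

lemma integrableOn_and_integral_Ioi_comp_joukowsky_div {F : ℝ → ℝ}
    (h : IntegrableOn (fun t ↦ F ((t + 1 / t) / 2) / t) (Ioo 0 1)) :
    IntegrableOn (fun t ↦ F ((t + 1 / t) / 2) / t) (Ioi 0) ∧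
      ∫ t in Ioi (0 : ℝ), F ((t + 1 / t) / 2) / t
        = 2 * ∫ t in Ioo (0 : ℝ) 1, F ((t + 1 / t) / 2) / t := by
  have hsymm : ∀ t : ℝ, (t⁻¹ + 1 / t⁻¹) / 2 = (t + 1 / t) / 2 := fun t ↦ by
    rw [one_div, one_div, inv_inv, add_comm]
  obtain ⟨hiff, heq⟩ :=
    integrableOn_Ioi_one_iff_and_integral_eq_comp_inv fun t ↦ F ((t + 1 / t) / 2)
  simp only [hsymm] at hiff heq
  have hIoc : IntegrableOn (fun t ↦ F ((t + 1 / t) / 2) / t) (Ioc 0 1) :=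
    h.congr_set_ae Ioo_ae_eq_Ioc.symm
  have hIoi : IntegrableOn (fun t ↦ F ((t + 1 / t) / 2) / t) (Ioi 1) := hiff.2 h
  rw [← Ioc_union_Ioi_eq_Ioi zero_le_one]
  refine ⟨hIoc.union hIoi, ?_⟩
  rw [setIntegral_union (Ioc_disjoint_Ioi le_rfl) measurableSet_Ioi hIoc hIoi,
    integral_Ioc_eq_integral_Ioo, heq, two_mul]

/-- Critical coupling constants: `κ_{1/2}^B = 2/(2/π + π/2)`, `κ_0^C = 2/π`,
`κ_1^C = π/2`, obtained as reciprocals of the corresponding kernel integrals. -/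
theorem critical_coupling_constants :
    (∫ t in Set.Ioi (0 : ℝ),
        (1 / (2 * Real.pi)) *
          (legendreQ 0 ((t + 1 / t) / 2) + legendreQ 1 ((t + 1 / t) / 2)) / t)⁻¹
      = 2 / (2 / Real.pi + Real.pi / 2) ∧
    (∫ t in Set.Ioi (0 : ℝ), (1 / Real.pi) * legendreQ 0 ((t + 1 / t) / 2) / t)⁻¹
      = 2 / Real.pi ∧
    (∫ t in Set.Ioi (0 : ℝ), (1 / Real.pi) * legendreQ 1 ((t + 1 / t) / 2) / t)⁻¹
      = Real.pi / 2 := by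
  obtain ⟨hint₀, hI₀⟩ := integrableOn_and_integral_Ioi_comp_joukowsky_div
    integrableOn_and_integral_legendreQ_zero_joukowsky_div_Ioo.1
  obtain ⟨hint₁, hI₁⟩ := integrableOn_and_integral_Ioi_comp_joukowsky_div
    integrableOn_and_integral_legendreQ_one_joukowsky_div_Ioo.1
  rw [integrableOn_and_integral_legendreQ_zero_joukowsky_div_Ioo.2] at hI₀
  rw [integrableOn_and_integral_legendreQ_one_joukowsky_div_Ioo.2] at hI₁
  simp_rw [mul_div_assoc, add_div (legendreQ 0 _)]
  rw [integral_const_mul, integral_add hint₀ hint₁, integral_const_mul, integral_const_mul,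
    hI₀, hI₁]
  refine ⟨?_, ?_, ?_⟩ <;> field_simp <;> ring
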